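/- The standard dual equivalence graph G_λ satisfies axiom 1 of dual equivalence graphs: a standard Young tableau T of shape λ admits an i-neighbor (i.e. exactly one of i, i+1 lies in τ(T)) if and only if there exists a unique standard tableau U of shape λ with T and U related by a dual Knuth move activating the bond a_i (i.e. exactly one of τ(T), τ(U) contains i and exactly the other contains i+1). -/

import Mathlib

open scoped Classical

/-- The content (diagonal) of a cell `(r, c)` is `c - r` (English convention,
NW–SE diagonals). -/
def cellContent (c : ℕ × ℕ) : ℤ := (c.2 : ℤ) - (c.1 : ℤ)

/-- A standard Young tableau of shape `μ`: a filling of the cells of `μ` with the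
entries `1, …, μ.card`, bijectively, strictly increasing along rows and columns.
(Cells outside the diagram carry the junk value `0`.) -/
structure SYT (μ : YoungDiagram) where
  entry : ℕ × ℕ → ℕ
  bijOn : Set.BijOn entry (μ : Set (ℕ × ℕ)) (Set.Icc 1 μ.card)
  zero_of_not_mem : ∀ c, c ∉ μ → entry c = 0
  row_strict : ∀ a b : ℕ × ℕ, a ∈ μ → b ∈ μ → a.1 = b.1 → a.2 < b.2 → entry a < entry b
  col_strict : ∀ a b : ℕ × ℕ, a ∈ μ → b ∈ μ → a.2 = b.2 → a.1 < b.1 → entry a < entry b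

/-- `i` is a descent of `T`: `i` is located in a (strictly) higher row than `i+1`. -/
def SYT.Desc {μ : YoungDiagram} (T : SYT μ) (i : ℕ) : Prop :=
  ∃ a b : ℕ × ℕ, a ∈ μ ∧ b ∈ μ ∧ T.entry a = i ∧ T.entry b = i + 1 ∧ a.1 < b.1

/-- `U` is obtained from `T` by the dual Knuth move exchanging `j` and `j+1`:
the exchange is permitted because some cell with entry `j-1` or `j+2` lies on a
diagonal strictly between the diagonals of `j` and `j+1`. -/
def SYT.DKSwap {μ : YoungDiagram} (T U : SYT μ) (j : ℕ) : Prop :=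
  1 ≤ j ∧ (∀ c : ℕ × ℕ, U.entry c = Equiv.swap j (j + 1) (T.entry c)) ∧
  ∃ a b w : ℕ × ℕ, a ∈ μ ∧ b ∈ μ ∧ w ∈ μ ∧
    T.entry a = j ∧ T.entry b = j + 1 ∧
    (T.entry w + 1 = j ∨ T.entry w = j + 2) ∧
    cellContent w ∈
      Set.Ioo (min (cellContent a) (cellContent b)) (max (cellContent a) (cellContent b))

/-- `T` and `U` are related by a dual Knuth move. -/
def SYT.DKEdge {μ : YoungDiagram} (T U : SYT μ) : Prop := ∃ j, T.DKSwap U j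

/-- The edge `(T,U)` activates the bond `a_i`: exactly one of the descent sets of
`T`, `U` contains `i`, and exactly the other contains `i+1`. -/
def SYT.Activ {μ : YoungDiagram} (T U : SYT μ) (i : ℕ) : Prop :=
  (T.Desc i ∧ ¬ U.Desc i ∧ U.Desc (i + 1) ∧ ¬ T.Desc (i + 1)) ∨
  (U.Desc i ∧ ¬ T.Desc i ∧ T.Desc (i + 1) ∧ ¬ U.Desc (i + 1))

/-!
Let `i`, `i + 1`, `i + 2` lie on the diagonals `x`, `y`, `z` of `T`; these are pairwise
distinct, `i` is a descent iff `y < x`, and `i + 1` is a descent iff `z < y`. So `T` has an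
`i`-neighbour iff `y` is not the middle one of `x, y, z`. If `z` is the middle one, `i + 2`
permits exchanging `i` and `i + 1`, and this move activates `a_i`; if `x` is the middle one, `i`
permits exchanging `i + 1` and `i + 2`, and again `a_i` is activated. The other of these two
moves never activates `a_i`, and a move exchanging `j` and `j + 1` leaves every descent outside
`j - 1, j, j + 1` in place, so it cannot change both `i` and `i + 1` unless `j ∈ {i, i + 1}`.
-/

theorem swap_succ_lt_swap_succ {j u v : ℕ} (huv : u < v) (h : ¬(u = j ∧ v = j + 1)) :
    Equiv.swap j (j + 1) u < Equiv.swap j (j + 1) v := by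
  simp only [Equiv.swap_apply_def]
  split_ifs <;> omega

namespace SYT

variable {μ : YoungDiagram}

theorem ext {T U : SYT μ} (h : ∀ c, T.entry c = U.entry c) : T = U := by
  obtain ⟨e, _⟩ := T
  obtain ⟨e', _⟩ := U
  obtain rfl : e = e' := funext h
  rfl

theorem entry_inj (T : SYT μ) {a b : ℕ × ℕ} (ha : a ∈ μ) (hb : b ∈ μ)
    (h : T.entry a = T.entry b) : a = b :=
  T.bijOn.injOn ha hb h

theorem exists_cell (T : SYT μ) {k : ℕ} (h1 : 1 ≤ k) (h2 : k ≤ μ.card) :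
    ∃ c ∈ μ, T.entry c = k :=
  T.bijOn.surjOn ⟨h1, h2⟩

theorem succ_cell_cases (T : SYT μ) {a b : ℕ × ℕ} {k : ℕ} (ha : a ∈ μ) (hb : b ∈ μ)
    (hA : T.entry a = k) (hB : T.entry b = k + 1) :
    (a.1 = b.1 ∧ b.2 = a.2 + 1) ∨ (a.1 < b.1 ∧ b.2 ≤ a.2) ∨ (b.1 < a.1 ∧ a.2 < b.2) := by
  rcases lt_trichotomy a.1 b.1 with h | h | h
  · refine Or.inr (Or.inl ⟨h, ?_⟩)
    by_contra! hc
    have hm : (a.1, b.2) ∈ μ := μ.up_left_mem h.le le_rfl hb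
    have h1 := T.row_strict a (a.1, b.2) ha hm rfl hc
    have h2 := T.col_strict (a.1, b.2) b hm hb rfl h
    omega
  · refine Or.inl ⟨h, ?_⟩
    rcases lt_trichotomy a.2 b.2 with h2 | h2 | h2
    · by_contra hc
      have hm : (a.1, a.2 + 1) ∈ μ := μ.up_left_mem h.le (by omega) hb
      have h1 := T.row_strict a (a.1, a.2 + 1) ha hm rfl (by omega)
      have h3 := T.row_strict (a.1, a.2 + 1) b hm hb h (by omega)
      omega
    · obtain rfl : a = b := Prod.ext h h2
      omega
    · have := T.row_strict b a hb ha h.symm h2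
      omega
  · refine Or.inr (Or.inr ⟨h, ?_⟩)
    by_contra! hc
    have hm : (b.1, a.2) ∈ μ := μ.up_left_mem h.le le_rfl ha
    rcases eq_or_lt_of_le hc with h2 | h2
    · have hlt := T.col_strict (b.1, a.2) a hm ha rfl h
      rw [show (b.1, a.2) = b from Prod.ext rfl h2.symm] at hlt
      omega
    · have h1 := T.row_strict b (b.1, a.2) hb hm rfl h2
      have h3 := T.col_strict (b.1, a.2) a hm ha rfl h
      omega

theorem succ_cell_of_col_eq (T : SYT μ) {a b : ℕ × ℕ} {k : ℕ} (ha : a ∈ μ) (hb : b ∈ μ)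
    (hA : T.entry a = k) (hB : T.entry b = k + 1) (h : a.2 = b.2) : b.1 = a.1 + 1 := by
  rcases T.succ_cell_cases ha hb hA hB with ⟨h1, h2⟩ | ⟨h1, h2⟩ | ⟨h1, h2⟩
  · omega
  · by_contra hc
    have hm : (a.1 + 1, a.2) ∈ μ := μ.up_left_mem (by omega) (by omega) hb
    have e1 := T.col_strict a (a.1 + 1, a.2) ha hm rfl (by omega)
    have e2 := T.col_strict (a.1 + 1, a.2) b hm hb (by omega) (by omega)
    omega
  · omega

theorem desc_iff_content_lt (T : SYT μ) {a b : ℕ × ℕ} {k : ℕ} (ha : a ∈ μ) (hb : b ∈ μ)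
    (hA : T.entry a = k) (hB : T.entry b = k + 1) :
    T.Desc k ↔ cellContent b < cellContent a := by
  have hcases := T.succ_cell_cases ha hb hA hB
  simp only [cellContent]
  constructor
  · rintro ⟨a', b', ha', hb', hA', hB', hlt⟩
    obtain rfl := T.entry_inj ha' ha (hA'.trans hA.symm)
    obtain rfl := T.entry_inj hb' hb (hB'.trans hB.symm)
    omega
  · intro h
    exact ⟨a, b, ha, hb, hA, hB, by omega⟩

theorem content_ne_of_succ (T : SYT μ) {a b : ℕ × ℕ} {k : ℕ} (ha : a ∈ μ) (hb : b ∈ μ)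
    (hA : T.entry a = k) (hB : T.entry b = k + 1) : cellContent a ≠ cellContent b := by
  have := T.succ_cell_cases ha hb hA hB
  simp only [cellContent]
  omega

/-- If `k` and `k + 2` shared a diagonal, the two cells of the rectangle they span would both
have to hold `k + 1`. -/
theorem content_ne_of_add_two (T : SYT μ) {a b : ℕ × ℕ} {k : ℕ} (ha : a ∈ μ) (hb : b ∈ μ)
    (hA : T.entry a = k) (hB : T.entry b = k + 2) : cellContent a ≠ cellContent b := by
  intro h
  simp only [cellContent] at h
  rcases lt_trichotomy a.1 b.1 with h1 | h1 | h1
  · have h2 : a.2 < b.2 := by omega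
    have hp : (a.1, b.2) ∈ μ := μ.up_left_mem h1.le le_rfl hb
    have hq : (b.1, a.2) ∈ μ := μ.up_left_mem le_rfl h2.le hb
    have e1 := T.row_strict a (a.1, b.2) ha hp rfl h2
    have e2 := T.col_strict (a.1, b.2) b hp hb rfl h1
    have e3 := T.col_strict a (b.1, a.2) ha hq rfl h1
    have e4 := T.row_strict (b.1, a.2) b hq hb rfl h2
    have := T.entry_inj hp hq (by omega)
    simp only [Prod.ext_iff] at this
    omega
  · obtain rfl : a = b := Prod.ext h1 (by omega)
    omega
  · have hm : (b.1, a.2) ∈ μ := μ.up_left_mem h1.le le_rfl ha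
    have e1 := T.row_strict b (b.1, a.2) hb hm rfl (by omega)
    have e2 := T.col_strict (b.1, a.2) a hm ha rfl h1
    omega

/-- Consecutive entries in a common row or column lie on adjacent diagonals, so no diagonal
separates them. -/
theorem row_ne_and_col_ne_of_mem_Ioo (T : SYT μ) {a b : ℕ × ℕ} {k : ℕ} {z : ℤ} (ha : a ∈ μ)
    (hb : b ∈ μ) (hA : T.entry a = k) (hB : T.entry b = k + 1)
    (hz : z ∈ Set.Ioo (min (cellContent a) (cellContent b)) (max (cellContent a) (cellContent b))) :
    a.1 ≠ b.1 ∧ a.2 ≠ b.2 := by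
  rw [Set.mem_Ioo] at hz
  have hcases := T.succ_cell_cases ha hb hA hB
  have hcol := T.succ_cell_of_col_eq ha hb hA hB
  simp only [cellContent] at hz
  omega

noncomputable def swap (T : SYT μ) {j : ℕ} (hj : 1 ≤ j) {a b : ℕ × ℕ}
    (ha : a ∈ μ) (hb : b ∈ μ) (hA : T.entry a = j) (hB : T.entry b = j + 1)
    (hrow : a.1 ≠ b.1) (hcol : a.2 ≠ b.2) : SYT μ where
  entry c := Equiv.swap j (j + 1) (T.entry c)
  bijOn := by
    have hjc : j + 1 ≤ μ.card := hB ▸ (T.bijOn.mapsTo hb).2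
    have hmap : Set.MapsTo (Equiv.swap j (j + 1)) (Set.Icc 1 μ.card) (Set.Icc 1 μ.card) := by
      intro x hx
      simp only [Set.mem_Icc, Equiv.swap_apply_def] at *
      split_ifs <;> omega
    have hsurj : Set.SurjOn (Equiv.swap j (j + 1)) (Set.Icc 1 μ.card) (Set.Icc 1 μ.card) :=
      fun y hy => ⟨Equiv.swap j (j + 1) y, hmap hy, Equiv.swap_apply_self j (j + 1) y⟩
    exact (Set.BijOn.mk hmap (Equiv.injective _).injOn hsurj).comp T.bijOn
  zero_of_not_mem c hc := by
    rw [T.zero_of_not_mem c hc]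
    exact Equiv.swap_apply_of_ne_of_ne (by omega) (by omega)
  row_strict x y hx hy hr hlt := by
    refine swap_succ_lt_swap_succ (T.row_strict x y hx hy hr hlt) ?_
    rintro ⟨h1, h2⟩
    obtain rfl := T.entry_inj hx ha (h1.trans hA.symm)
    obtain rfl := T.entry_inj hy hb (h2.trans hB.symm)
    exact hrow hr
  col_strict x y hx hy hr hlt := by
    refine swap_succ_lt_swap_succ (T.col_strict x y hx hy hr hlt) ?_
    rintro ⟨h1, h2⟩
    obtain rfl := T.entry_inj hx ha (h1.trans hA.symm)
    obtain rfl := T.entry_inj hy hb (h2.trans hB.symm)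
    exact hcol hr

theorem existsUnique_entry_eq_swap (T : SYT μ) {j : ℕ} (hj : 1 ≤ j) {a b : ℕ × ℕ}
    (ha : a ∈ μ) (hb : b ∈ μ) (hA : T.entry a = j) (hB : T.entry b = j + 1)
    (hrow : a.1 ≠ b.1) (hcol : a.2 ≠ b.2) :
    ∃! U : SYT μ, ∀ c, U.entry c = Equiv.swap j (j + 1) (T.entry c) :=
  ⟨T.swap hj ha hb hA hB hrow hcol, fun _ => rfl,
    fun _ hU => ext fun c => hU c⟩

theorem desc_iff_of_perm {T U : SYT μ} (σ : Equiv.Perm ℕ)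
    (hU : ∀ c, U.entry c = σ (T.entry c)) {k : ℕ} (hk : σ k = k) (hk1 : σ (k + 1) = k + 1) :
    U.Desc k ↔ T.Desc k := by
  have key : ∀ c m, σ m = m → (U.entry c = m ↔ T.entry c = m) := fun c m hm => by
    rw [hU c, ← σ.eq_symm_apply, σ.symm_apply_eq.2 hm.symm]
  simp only [Desc, key _ k hk, key _ (k + 1) hk1]

theorem Activ.xor_desc {T U : SYT μ} {i : ℕ} (h : T.Activ U i) :
    Xor (T.Desc i) (T.Desc (i + 1)) := by
  rcases h with ⟨h1, -, -, h4⟩ | ⟨-, h2, h3, -⟩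
  · exact Or.inl ⟨h1, h4⟩
  · exact Or.inr ⟨h3, h2⟩

theorem Activ.not_desc_iff {T U : SYT μ} {i : ℕ} (h : T.Activ U i) :
    ¬(U.Desc i ↔ T.Desc i) ∧ ¬(U.Desc (i + 1) ↔ T.Desc (i + 1)) := by
  unfold Activ at h
  tauto

/-- A swap of `j` and `j + 1` changes only the descents `j - 1`, `j`, `j + 1`, while an
`a_i`-activating edge changes both `i` and `i + 1`. -/
theorem eq_or_eq_succ_of_activ {T U : SYT μ} {i j : ℕ}
    (hU : ∀ c, U.entry c = Equiv.swap j (j + 1) (T.entry c)) (hact : T.Activ U i) :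
    j = i ∨ j = i + 1 := by
  by_contra! hj
  have fix : ∀ k, k ≠ j → k ≠ j + 1 → Equiv.swap j (j + 1) k = k :=
    fun _ => Equiv.swap_apply_of_ne_of_ne
  obtain ⟨hi, hi1⟩ := hact.not_desc_iff
  by_cases hji : j + 1 = i
  · exact hi1 (desc_iff_of_perm _ hU (fix _ (by omega) (by omega)) (fix _ (by omega) (by omega)))
  · exact hi (desc_iff_of_perm _ hU (fix _ (by omega) (by omega)) (fix _ (by omega) (by omega)))

variable {T U : SYT μ} {i : ℕ} {a b w : ℕ × ℕ}

theorem activ_iff_of_swap (ha : a ∈ μ) (hb : b ∈ μ) (hw : w ∈ μ) (hA : T.entry a = i)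
    (hB : T.entry b = i + 1) (hW : T.entry w = i + 2)
    (hU : ∀ c, U.entry c = Equiv.swap i (i + 1) (T.entry c)) :
    T.Activ U i ↔
      cellContent w ∈ Set.Ioo (min (cellContent a) (cellContent b))
        (max (cellContent a) (cellContent b)) := by
  have hUa : U.entry a = i + 1 := by rw [hU, hA, Equiv.swap_apply_left]
  have hUb : U.entry b = i := by rw [hU, hB, Equiv.swap_apply_right]
  have hUw : U.entry w = i + 1 + 1 := by
    rw [hU, hW, Equiv.swap_apply_of_ne_of_ne (by omega) (by omega)]
  have hab := T.content_ne_of_succ ha hb hA hB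
  have haw := T.content_ne_of_add_two ha hw hA hW
  have hbw := T.content_ne_of_succ (k := i + 1) hb hw hB hW
  rw [Activ, T.desc_iff_content_lt ha hb hA hB, T.desc_iff_content_lt (k := i + 1) hb hw hB hW,
    U.desc_iff_content_lt hb ha hUb hUa, U.desc_iff_content_lt ha hw hUa hUw, Set.mem_Ioo]
  constructor <;> intro h <;> omega

theorem activ_iff_of_swap_succ (ha : a ∈ μ) (hb : b ∈ μ) (hw : w ∈ μ) (hA : T.entry a = i)
    (hB : T.entry b = i + 1) (hW : T.entry w = i + 2)
    (hU : ∀ c, U.entry c = Equiv.swap (i + 1) (i + 1 + 1) (T.entry c)) :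
    T.Activ U i ↔
      cellContent a ∈ Set.Ioo (min (cellContent b) (cellContent w))
        (max (cellContent b) (cellContent w)) := by
  have hUa : U.entry a = i := by rw [hU, hA, Equiv.swap_apply_of_ne_of_ne (by omega) (by omega)]
  have hUb : U.entry b = i + 1 + 1 := by rw [hU, hB, Equiv.swap_apply_left]
  have hUw : U.entry w = i + 1 := by rw [hU, hW, Equiv.swap_apply_right]
  have hab := T.content_ne_of_succ ha hb hA hB
  have haw := T.content_ne_of_add_two ha hw hA hW
  have hbw := T.content_ne_of_succ (k := i + 1) hb hw hB hW
  rw [Activ, T.desc_iff_content_lt ha hb hA hB, T.desc_iff_content_lt (k := i + 1) hb hw hB hW,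
    U.desc_iff_content_lt ha hw hUa hUw, U.desc_iff_content_lt hw hb hUw hUb, Set.mem_Ioo]
  constructor <;> intro h <;> omega

theorem dkEdge_and_activ_iff_swap (hi : 1 ≤ i) (ha : a ∈ μ) (hb : b ∈ μ) (hw : w ∈ μ)
    (hA : T.entry a = i) (hB : T.entry b = i + 1) (hW : T.entry w = i + 2)
    (hmid : cellContent w ∈ Set.Ioo (min (cellContent a) (cellContent b))
      (max (cellContent a) (cellContent b))) :
    T.DKEdge U ∧ T.Activ U i ↔ ∀ c, U.entry c = Equiv.swap i (i + 1) (T.entry c) := by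
  refine ⟨fun ⟨⟨j, _, hU, _⟩, hact⟩ => ?_, fun hU => ?_⟩
  · rcases eq_or_eq_succ_of_activ hU hact with rfl | rfl
    · exact hU
    · have := (activ_iff_of_swap_succ ha hb hw hA hB hW hU).1 hact
      rw [Set.mem_Ioo] at hmid this
      omega
  · exact ⟨⟨i, hi, hU, a, b, w, ha, hb, hw, hA, hB, Or.inr hW, hmid⟩,
      (activ_iff_of_swap ha hb hw hA hB hW hU).2 hmid⟩

theorem dkEdge_and_activ_iff_swap_succ (ha : a ∈ μ) (hb : b ∈ μ) (hw : w ∈ μ)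
    (hA : T.entry a = i) (hB : T.entry b = i + 1) (hW : T.entry w = i + 2)
    (hmid : cellContent a ∈ Set.Ioo (min (cellContent b) (cellContent w))
      (max (cellContent b) (cellContent w))) :
    T.DKEdge U ∧ T.Activ U i ↔ ∀ c, U.entry c = Equiv.swap (i + 1) (i + 1 + 1) (T.entry c) := by
  refine ⟨fun ⟨⟨j, _, hU, _⟩, hact⟩ => ?_, fun hU => ?_⟩
  · rcases eq_or_eq_succ_of_activ hU hact with rfl | rfl
    · have := (activ_iff_of_swap ha hb hw hA hB hW hU).1 hact
      rw [Set.mem_Ioo] at hmid this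
      omega
    · exact hU
  · exact ⟨⟨i + 1, by omega, hU, b, w, a, hb, hw, ha, hB, hW, Or.inl (by omega), hmid⟩,
      (activ_iff_of_swap_succ ha hb hw hA hB hW hU).2 hmid⟩

/-- The two alternatives say that the diagonal of `i + 1` is not the middle one of the three. -/
theorem xor_desc_iff (ha : a ∈ μ) (hb : b ∈ μ) (hw : w ∈ μ)
    (hA : T.entry a = i) (hB : T.entry b = i + 1) (hW : T.entry w = i + 2) :
    Xor (T.Desc i) (T.Desc (i + 1)) ↔
      cellContent w ∈ Set.Ioo (min (cellContent a) (cellContent b))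
          (max (cellContent a) (cellContent b)) ∨
        cellContent a ∈ Set.Ioo (min (cellContent b) (cellContent w))
          (max (cellContent b) (cellContent w)) := by
  have hab := T.content_ne_of_succ ha hb hA hB
  have haw := T.content_ne_of_add_two ha hw hA hW
  have hbw := T.content_ne_of_succ (k := i + 1) hb hw hB hW
  rw [Xor, T.desc_iff_content_lt ha hb hA hB, T.desc_iff_content_lt (k := i + 1) hb hw hB hW,
    Set.mem_Ioo, Set.mem_Ioo]
  constructor <;> intro h <;> omega

end SYT

/-- Axiom 1 for the standard dual equivalence graph `G_λ`: a standard tableau `T`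
admits an `i`-neighbor (exactly one of `i`, `i+1` is a descent of `T`) iff there is
a unique standard tableau `U` related to `T` by a dual Knuth move activating the
bond `a_i`. -/
theorem stmt_10 (n : ℕ) (lam : YoungDiagram) (hcard : lam.card = n + 1)
    (i : ℕ) (hi : 1 ≤ i) (hin : i + 1 ≤ n) (T : SYT lam) :
    Xor' (T.Desc i) (T.Desc (i + 1)) ↔
      ∃! U : SYT lam, T.DKEdge U ∧ T.Activ U i := by
  obtain ⟨a, ha, hA⟩ := T.exists_cell hi (by omega)
  obtain ⟨b, hb, hB⟩ := T.exists_cell (k := i + 1) (by omega) (by omega)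
  obtain ⟨w, hw, hW⟩ := T.exists_cell (k := i + 2) (by omega) (by omega)
  refine ⟨fun hxor => ?_, fun ⟨_, ⟨_, hact⟩, _⟩ => hact.xor_desc⟩
  rcases (T.xor_desc_iff ha hb hw hA hB hW).1 hxor with hmid | hmid
  · obtain ⟨hrow, hcol⟩ := T.row_ne_and_col_ne_of_mem_Ioo ha hb hA hB hmid
    simp_rw [SYT.dkEdge_and_activ_iff_swap hi ha hb hw hA hB hW hmid]
    exact T.existsUnique_entry_eq_swap hi ha hb hA hB hrow hcol
  · obtain ⟨hrow, hcol⟩ := T.row_ne_and_col_ne_of_mem_Ioo (k := i + 1) hb hw hB hW hmid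
    simp_rw [SYT.dkEdge_and_activ_iff_swap_succ ha hb hw hA hB hW hmid]
    exact T.existsUnique_entry_eq_swap (by omega) hb hw hB hW hrow hcol
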